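/- On R^4, define P with nonzero entries P^{12} = p12 + p13 x4, P^{13} = p13, P^{23} = e^{2x4} p23, P^{24} = e^{x4} p24 (antisymmetric, others zero), and P' with nonzero entries P'^{12} = p'_{12} + a23 x3 + a24 x4 + (a53 p13/p23) x3 x4, P'^{13} = (a53 p13/p23) x3, P'^{23} = a53 e^{2x4} x3, P'^{24} = e^{x4}(p'_{24} + a64 x4), where all parameters are real constants and p23 ≠ 0. Then P and P' are compatible Poisson structures: [P,P] = [P',P'] = [P,P'] = 0 identically. -/

import Mathlib

open scoped BigOperators

noncomputable def pd {m : ℕ} (μ : Fin m) (f : (Fin m → ℝ) → ℝ) (x : Fin m → ℝ) : ℝ :=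
  fderiv ℝ f x (Pi.single μ 1)

/-- Poisson bracket associated to a bivector field `P`. -/
noncomputable def pbrk {m : ℕ} (P : (Fin m → ℝ) → Fin m → Fin m → ℝ)
    (f g : (Fin m → ℝ) → ℝ) (x : Fin m → ℝ) : ℝ :=
  ∑ μ, ∑ ν, P x μ ν * pd μ f x * pd ν g x

/-- Schouten bracket `[P,P]^{λμν}`. -/
noncomputable def schouten {m : ℕ} (P : (Fin m → ℝ) → Fin m → Fin m → ℝ)
    (l μ ν : Fin m) (x : Fin m → ℝ) : ℝ :=
  ∑ ρ, (P x ρ l * pd ρ (fun y => P y μ ν) x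
      + P x ρ ν * pd ρ (fun y => P y l μ) x
      + P x ρ μ * pd ρ (fun y => P y ν l) x)

/-- Mixed Schouten bracket `[P,Q]^{λμν}`. -/
noncomputable def schoutenMixed {m : ℕ} (P Q : (Fin m → ℝ) → Fin m → Fin m → ℝ)
    (l μ ν : Fin m) (x : Fin m → ℝ) : ℝ :=
  ∑ ρ, (P x ρ l * pd ρ (fun y => Q y μ ν) x + Q x ρ l * pd ρ (fun y => P y μ ν) x
      + P x ρ ν * pd ρ (fun y => Q y l μ) x + Q x ρ ν * pd ρ (fun y => P y l μ) x
      + P x ρ μ * pd ρ (fun y => Q y ν l) x + Q x ρ μ * pd ρ (fun y => P y ν l) x)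

/-- The Poisson bivector `P` on the group `A_{4,2}^{-1}`. -/
noncomputable def P42 (p12 p13 p23 p24 : ℝ) : (Fin 4 → ℝ) → Fin 4 → Fin 4 → ℝ :=
  fun x μ ν =>
    let A := p12 + p13 * x 3
    let B := Real.exp (2 * x 3) * p23
    let C := Real.exp (x 3) * p24
    !![0, A, p13, 0;
       -A, 0, B, C;
       -p13, -B, 0, 0;
       0, -C, 0, 0] μ ν

/-- The Poisson bivector `P'` on the group `A_{4,2}^{-1}`. -/
noncomputable def P42' (p13 p23 p12' p24' a23 a24 a53 a64 : ℝ) :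
    (Fin 4 → ℝ) → Fin 4 → Fin 4 → ℝ :=
  fun x μ ν =>
    let A := p12' + a23 * x 2 + a24 * x 3 + a53 * p13 / p23 * x 2 * x 3
    let B := a53 * p13 / p23 * x 2
    let C := a53 * Real.exp (2 * x 3) * x 2
    let D := Real.exp (x 3) * (p24' + a64 * x 3)
    !![0, A, B, 0;
       -A, 0, C, D;
       -B, -C, 0, 0;
       0, -D, 0, 0] μ ν

/-!
For an antisymmetric bivector field the Schouten bracket `[P,P]^{λμν}`, and likewise the mixed
bracket of two such fields, is totally antisymmetric in `(λ, μ, ν)`, so on `ℝ⁴` it suffices to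
check the four increasing index triples. All entries of `P` and `P'` depend only on the last two
coordinates `x 2`, `x 3` (the paper's `x3`, `x4`), so their partial derivatives are explicit, and
each of the twelve remaining components is an identity in `x 2`, `x 3` and `exp (x 3)`.
-/

section PartialDerivative

variable {m : ℕ} (μ : Fin m) {f g : (Fin m → ℝ) → ℝ} {x : Fin m → ℝ}

theorem pd_const (c : ℝ) : pd μ (fun _ => c) x = 0 := by
  simp [pd]

theorem pd_apply (i : Fin m) : pd μ (fun y => y i) x = if μ = i then 1 else 0 := by
  rw [pd, (hasFDerivAt_apply i x).fderiv]
  simp [Pi.single_apply, eq_comm]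

theorem pd_neg : pd μ (fun y => -f y) x = -pd μ f x := by
  simp [pd]

theorem pd_add (hf : DifferentiableAt ℝ f x) (hg : DifferentiableAt ℝ g x) :
    pd μ (fun y => f y + g y) x = pd μ f x + pd μ g x := by
  simp [pd, fderiv_fun_add hf hg]

theorem pd_mul (hf : DifferentiableAt ℝ f x) (hg : DifferentiableAt ℝ g x) :
    pd μ (fun y => f y * g y) x = f x * pd μ g x + g x * pd μ f x := by
  simp [pd, fderiv_fun_mul hf hg]

theorem pd_exp (hf : DifferentiableAt ℝ f x) :
    pd μ (fun y => Real.exp (f y)) x = Real.exp (f x) * pd μ f x := by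
  simp [pd, fderiv_exp hf]

end PartialDerivative

section Alternating

variable {ι : Type*} [LinearOrder ι] {T : ι → ι → ι → ℝ}

theorem eq_zero_of_alternating_of_lt (swap : ∀ l μ ν, T μ l ν = -T l μ ν)
    (cycle : ∀ l μ ν, T μ ν l = T l μ ν) (h : ∀ l μ ν, l < μ → μ < ν → T l μ ν = 0)
    (l μ ν : ι) : T l μ ν = 0 := by
  have diag : ∀ a b, T a a b = 0 := fun a b => by linarith [swap a a b]
  suffices key : ∀ l μ ν, l < μ → T l μ ν = 0 by
    rcases lt_trichotomy l μ with hlμ | rfl | hμl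
    · exact key l μ ν hlμ
    · exact diag l ν
    · linarith [swap μ l ν, key μ l ν hμl]
  intro l μ ν hlμ
  rcases lt_trichotomy μ ν with hμν | rfl | hνμ
  · exact h l μ ν hlμ hμν
  · rw [← cycle]; exact diag μ l
  rcases lt_trichotomy l ν with hlν | rfl | hνl
  · linarith [cycle ν l μ, swap l ν μ, h l ν μ hlν hνμ]
  · rw [cycle]; exact diag l μ
  · rw [cycle ν l μ]; exact h ν l μ hνl hlμ

end Alternating

theorem eq_zero_of_alternating_fin_four {T : Fin 4 → Fin 4 → Fin 4 → ℝ}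
    (swap : ∀ l μ ν, T μ l ν = -T l μ ν) (cycle : ∀ l μ ν, T μ ν l = T l μ ν)
    (h012 : T 0 1 2 = 0) (h013 : T 0 1 3 = 0) (h023 : T 0 2 3 = 0) (h123 : T 1 2 3 = 0)
    (l μ ν : Fin 4) : T l μ ν = 0 := by
  refine eq_zero_of_alternating_of_lt swap cycle (fun l μ ν hlμ hμν => ?_) l μ ν
  have increasing : ∀ l μ ν : Fin 4, l < μ → μ < ν →
      l = 0 ∧ μ = 1 ∧ ν = 2 ∨ l = 0 ∧ μ = 1 ∧ ν = 3 ∨ l = 0 ∧ μ = 2 ∧ ν = 3 ∨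
        l = 1 ∧ μ = 2 ∧ ν = 3 := by
    decide
  rcases increasing l μ ν hlμ hμν with ⟨rfl, rfl, rfl⟩ | ⟨rfl, rfl, rfl⟩ | ⟨rfl, rfl, rfl⟩ |
    ⟨rfl, rfl, rfl⟩ <;> assumption

section SchoutenSymmetry

variable {m : ℕ} {P Q : (Fin m → ℝ) → Fin m → Fin m → ℝ} (x : Fin m → ℝ)

theorem pd_swap_of_antisymm (hP : ∀ y a b, P y b a = -P y a b) (ρ a b : Fin m) :
    pd ρ (fun y => P y b a) x = -pd ρ (fun y => P y a b) x := by
  rw [← pd_neg]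
  exact congrArg (pd ρ · x) (funext fun y => hP y a b)

theorem schouten_cycle (l μ ν : Fin m) : schouten P μ ν l x = schouten P l μ ν x :=
  Finset.sum_congr rfl fun _ _ => by ring

theorem schouten_swap (hP : ∀ y a b, P y b a = -P y a b) (l μ ν : Fin m) :
    schouten P μ l ν x = -schouten P l μ ν x := by
  simp only [schouten, ← Finset.sum_neg_distrib]
  refine Finset.sum_congr rfl fun ρ _ => ?_
  rw [pd_swap_of_antisymm x hP ρ l ν, pd_swap_of_antisymm x hP ρ μ l,
    pd_swap_of_antisymm x hP ρ ν μ]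
  ring

theorem schoutenMixed_cycle (l μ ν : Fin m) :
    schoutenMixed P Q μ ν l x = schoutenMixed P Q l μ ν x :=
  Finset.sum_congr rfl fun _ _ => by ring

theorem schoutenMixed_swap (hP : ∀ y a b, P y b a = -P y a b)
    (hQ : ∀ y a b, Q y b a = -Q y a b) (l μ ν : Fin m) :
    schoutenMixed P Q μ l ν x = -schoutenMixed P Q l μ ν x := by
  simp only [schoutenMixed, ← Finset.sum_neg_distrib]
  refine Finset.sum_congr rfl fun ρ _ => ?_
  rw [pd_swap_of_antisymm x hP ρ l ν, pd_swap_of_antisymm x hP ρ μ l,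
    pd_swap_of_antisymm x hP ρ ν μ, pd_swap_of_antisymm x hQ ρ l ν,
    pd_swap_of_antisymm x hQ ρ μ l, pd_swap_of_antisymm x hQ ρ ν μ]
  ring

end SchoutenSymmetry

theorem P42_swap (p12 p13 p23 p24 : ℝ) (y : Fin 4 → ℝ) (a b : Fin 4) :
    P42 p12 p13 p23 p24 y b a = -P42 p12 p13 p23 p24 y a b := by
  fin_cases a <;> fin_cases b <;> simp [P42]

theorem P42'_swap (p13 p23 p12' p24' a23 a24 a53 a64 : ℝ) (y : Fin 4 → ℝ) (a b : Fin 4) :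
    P42' p13 p23 p12' p24' a23 a24 a53 a64 y b a =
      -P42' p13 p23 p12' p24' a23 a24 a53 a64 y a b := by
  fin_cases a <;> fin_cases b <;> simp [P42']

theorem pd_P42 (p12 p13 p23 p24 : ℝ) (μ a b : Fin 4) (x : Fin 4 → ℝ) :
    pd μ (fun y => P42 p12 p13 p23 p24 y a b) x =
      if μ = 3 then
        !![0, p13, 0, 0;
           -p13, 0, 2 * Real.exp (2 * x 3) * p23, Real.exp (x 3) * p24;
           0, -(2 * Real.exp (2 * x 3) * p23), 0, 0;
           0, -(Real.exp (x 3) * p24), 0, 0] a b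
      else 0 := by
  fin_cases a <;> fin_cases b <;>
    simp (disch := fun_prop) [P42, pd_const, pd_apply, pd_neg, pd_add, pd_mul, pd_exp] <;>
    split_ifs <;> ring

theorem pd_P42' (p13 p23 p12' p24' a23 a24 a53 a64 : ℝ) (μ a b : Fin 4) (x : Fin 4 → ℝ) :
    pd μ (fun y => P42' p13 p23 p12' p24' a23 a24 a53 a64 y a b) x =
      (if μ = 2 then
        !![0, a23 + a53 * p13 / p23 * x 3, a53 * p13 / p23, 0;
           -(a23 + a53 * p13 / p23 * x 3), 0, a53 * Real.exp (2 * x 3), 0;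
           -(a53 * p13 / p23), -(a53 * Real.exp (2 * x 3)), 0, 0;
           0, 0, 0, 0] a b
      else 0) +
      (if μ = 3 then
        !![0, a24 + a53 * p13 / p23 * x 2, 0, 0;
           -(a24 + a53 * p13 / p23 * x 2), 0, 2 * a53 * Real.exp (2 * x 3) * x 2,
             Real.exp (x 3) * (p24' + a64 + a64 * x 3);
           0, -(2 * a53 * Real.exp (2 * x 3) * x 2), 0, 0;
           0, -(Real.exp (x 3) * (p24' + a64 + a64 * x 3)), 0, 0] a b
      else 0) := by
  fin_cases a <;> fin_cases b <;>
    simp (disch := fun_prop) [P42', pd_const, pd_apply, pd_neg, pd_add, pd_mul, pd_exp] <;>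
    split_ifs <;> ring

theorem A42_compatible (p12 p13 p23 p24 p12' p24' a23 a24 a53 a64 : ℝ)
    (h23 : p23 ≠ 0) :
    (∀ x l μ ν, schouten (P42 p12 p13 p23 p24) l μ ν x = 0) ∧
    (∀ x l μ ν, schouten (P42' p13 p23 p12' p24' a23 a24 a53 a64) l μ ν x = 0) ∧
    (∀ x l μ ν, schoutenMixed (P42 p12 p13 p23 p24)
        (P42' p13 p23 p12' p24' a23 a24 a53 a64) l μ ν x = 0) := by
  have hP := P42_swap p12 p13 p23 p24
  have hP' := P42'_swap p13 p23 p12' p24' a23 a24 a53 a64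
  refine ⟨fun x => ?_, fun x => ?_, fun x => ?_⟩
  · refine eq_zero_of_alternating_fin_four (schouten_swap x hP) (schouten_cycle x) ?_ ?_ ?_ ?_
    all_goals
      simp only [schouten, Fin.sum_univ_four, pd_P42]
      simp [P42]
  · refine eq_zero_of_alternating_fin_four (schouten_swap x hP') (schouten_cycle x) ?_ ?_ ?_ ?_
    all_goals
      simp only [schouten, Fin.sum_univ_four, pd_P42']
      simp [P42'] <;> ring
  · refine eq_zero_of_alternating_fin_four (schoutenMixed_swap x hP hP') (schoutenMixed_cycle x)
      ?_ ?_ ?_ ?_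
    all_goals
      simp only [schoutenMixed, Fin.sum_univ_four, pd_P42, pd_P42']
      simp [P42, P42'] <;> field_simp <;> ring
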